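/- arXiv:2510.09270 — 2 statements merged into one kernel-verified Lean document; each statement's English description precedes it below -/
import Mathlib

section
/- If the graph G contains no colliders, then for every ν ∈ P(X) the measure ν^A does not depend on the particular choice of the regular conditional kernels of ν used in its construction. Moreover, for every fully connected subset I ⊆ {1,...,K} (i.e., there is an edge between any two nodes of I) and every cell c_I of the induced partition A_I, one has ν^A(c_I) = ν(c_I). -/
open MeasureTheory Finset
open scoped ENNReal NNReal

noncomputable section

abbrev I01 : Type := unitInterval

def half : I01 := ⟨1 / 2, by norm_num⟩

/-- Index of the dyadic cell of side length `2^{-η}` containing `t ∈ [0,1]`. -/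
def cIdx (η : ℕ) (t : I01) : ℕ := min ⌊(t : ℝ) * 2 ^ η⌋₊ (2 ^ η - 1)

lemma cIdx_le_real (η : ℕ) (t : I01) : (cIdx η t : ℝ) ≤ 2 ^ η - 1 := by
  have h : cIdx η t ≤ 2 ^ η - 1 := min_le_right _ _
  have h1 : (1 : ℕ) ≤ 2 ^ η := Nat.one_le_two_pow
  calc (cIdx η t : ℝ) ≤ ((2 ^ η - 1 : ℕ) : ℝ) := by exact_mod_cast h
    _ = 2 ^ η - 1 := by rw [Nat.cast_sub h1]; push_cast; ring

/-- Midpoint of the dyadic cell of side length `2^{-η}` containing `t`. -/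
def cMid (η : ℕ) (t : I01) : I01 :=
  ⟨((cIdx η t : ℝ) + 1 / 2) / 2 ^ η, by
    constructor
    · positivity
    · rw [div_le_one (by positivity)]
      have := cIdx_le_real η t
      linarith⟩

/-- Order-1 Wasserstein distance (w.r.t. the given metric, infimum over couplings). -/
def Wass {α : Type*} [MeasurableSpace α] [PseudoMetricSpace α] (μ ν : Measure α) : ℝ :=
  sInf {r | ∃ π : Measure (α × α), π.map Prod.fst = μ ∧ π.map Prod.snd = ν ∧
    r = ∫ p, dist p.1 p.2 ∂π}

/-- Total variation distance, `sup { ∫ f dμ - ∫ f dν : f measurable, |f| ≤ 1/2 }`. -/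
def TVDist {α : Type*} [MeasurableSpace α] (μ ν : Measure α) : ℝ :=
  sSup {r | ∃ f : α → ℝ, Measurable f ∧ (∀ x, |f x| ≤ 1 / 2) ∧
    r = (∫ x, f x ∂μ) - ∫ x, f x ∂ν}

/-- Total variation norm of a signed measure, `sup { ∫ f dν : |f| ≤ 1/2 } = |ν|(univ)/2`. -/
def tvNorm {α : Type*} [MeasurableSpace α] (s : SignedMeasure α) : ℝ :=
  (s.totalVariation Set.univ).toReal / 2

/-- `m` conditioned on `s` (normalized restriction), Dirac at `x₀` if `m s = 0`. -/
def condOn {α : Type*} [MeasurableSpace α] (m : Measure α) (s : Set α) (x₀ : α) : Measure α :=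
  if m s = 0 then Measure.dirac x₀ else (m s)⁻¹ • m.restrict s

/-- Empirical measure of the sample `ω`. -/
def empOf {α : Type*} [MeasurableSpace α] (n : ℕ) (ω : Fin n → α) : Measure α :=
  (n : ℝ≥0∞)⁻¹ • ∑ i : Fin n, Measure.dirac (ω i)

/-- Law of `n` i.i.d. samples from `μ`. -/
def iid {α : Type*} [MeasurableSpace α] (n : ℕ) (μ : Measure α) : Measure (Fin n → α) :=
  Measure.pi fun _ => μ

section Graphical

variable {K : ℕ}

abbrev Coord (d : Fin K → ℕ) (k : Fin K) : Type := Fin (d k) → I01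
abbrev Pt (d : Fin K → ℕ) : Type := ∀ k : Fin K, Coord d k
abbrev PtOn (d : Fin K → ℕ) (I : Finset (Fin K)) : Type := ∀ j : I, Coord d j.1

def projOn (d : Fin K → ℕ) (I : Finset (Fin K)) (x : Pt d) : PtOn d I := fun j => x j.1

def restrOn (d : Fin K → ℕ) {I J : Finset (Fin K)} (h : I ⊆ J) (y : PtOn d J) : PtOn d I :=
  fun j => y ⟨j.1, h j.2⟩

def basePt (d : Fin K → ℕ) : Pt d := fun _ _ => half

/-- The cell of the partition of `X_I` into cubes of side length `2^{-η}` containing `x`. -/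
def cellOn (d : Fin K → ℕ) (η : ℕ) (I : Finset (Fin K)) (x : PtOn d I) : Set (PtOn d I) :=
  {y | ∀ j i, cIdx η (y j i) = cIdx η (x j i)}

/-- The cylinder over the cell of `A_I` containing the coordinates `x_I` of `x`. -/
def cylOf (d : Fin K → ℕ) (η : ℕ) (I : Finset (Fin K)) (x : Pt d) : Set (Pt d) :=
  {y | ∀ j ∈ I, ∀ i, cIdx η (y j i) = cIdx η (x j i)}

def midPtOn (d : Fin K → ℕ) (η : ℕ) (I : Finset (Fin K)) (x : PtOn d I) : PtOn d I :=
  fun j i => cMid η (x j i)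

def midPt (d : Fin K → ℕ) (η : ℕ) (x : Pt d) : Pt d := fun k i => cMid η (x k i)

/-- The DAG (given by its parent map) is topologically sorted. -/
def SortedGraph (pa : Fin K → Finset (Fin K)) : Prop := ∀ k, ∀ j ∈ pa k, j < k

/-- A set of nodes is fully connected (any two of its nodes are joined by an edge). -/
def FullConn (pa : Fin K → Finset (Fin K)) (I : Finset (Fin K)) : Prop :=
  ∀ i ∈ I, ∀ j ∈ I, i < j → i ∈ pa j

/-- The graph has no colliders: every parent set is fully connected. -/
def NoColliders (pa : Fin K → Finset (Fin K)) : Prop := ∀ k, FullConn pa (pa k)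

def below (k : Fin K) : Finset (Fin K) := Finset.univ.filter fun j => j < k
def uptoI (k : Fin K) : Finset (Fin K) := Finset.univ.filter fun j => j ≤ k
def preOf (pa : Fin K → Finset (Fin K)) (k : Fin K) : Finset (Fin K) := uptoI k \ pa k

def dpa (d : Fin K → ℕ) (pa : Fin K → Finset (Fin K)) (k : Fin K) : ℕ := ∑ j ∈ pa k, d j

def dloc (d : Fin K → ℕ) (pa : Fin K → Finset (Fin K)) : ℕ :=
  Finset.univ.sup fun k : Fin K => max 2 (d k) + dpa d pa k

def dmax (d : Fin K → ℕ) : ℕ := Finset.univ.sup fun k : Fin K => max 2 (d k)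

/-- `κ` is a regular conditional distribution of the coordinates in `J` given those in `I`,
under `μ`. -/
def IsCondD (d : Fin K → ℕ) (μ : Measure (Pt d)) (I J : Finset (Fin K))
    (κ : PtOn d I → Measure (PtOn d J)) : Prop :=
  Measurable κ ∧ (∀ y, IsProbabilityMeasure (κ y)) ∧
    ∀ (A : Set (PtOn d I)) (B : Set (PtOn d J)), MeasurableSet A → MeasurableSet B →
      μ {x | projOn d I x ∈ A ∧ projOn d J x ∈ B} = ∫⁻ y in A, κ y B ∂(μ.map (projOn d I))

/-- `μ ∈ P_G`: for each node, some conditional distribution of `x_k` given all earlier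
coordinates factors through the parent coordinates only. -/
def MemPG (d : Fin K → ℕ) (pa : Fin K → Finset (Fin K)) (μ : Measure (Pt d)) : Prop :=
  ∀ k : Fin K, ∃ κ : PtOn d (pa k) → Measure (PtOn d ({k} : Finset (Fin K))),
    IsCondD d μ (below k ∪ pa k) {k}
      fun y => κ (restrOn d (fun _ hj => Finset.mem_union_right _ hj) y)

/-- Wasserstein-Lipschitz kernel assumption with constant `L`. -/
def WLip (d : Fin K → ℕ) (pa : Fin K → Finset (Fin K)) (L : ℝ) (μ : Measure (Pt d)) : Prop :=
  ∀ k : Fin K, 1 ≤ k.1 →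
    ∃ κ : PtOn d (pa k) → Measure (PtOn d ({k} : Finset (Fin K))),
      IsCondD d μ (pa k) {k} κ ∧
        ∀ x x' : PtOn d (pa k), Wass (κ x) (κ x') ≤ L * dist x x'

/-- Total-variation-Lipschitz kernel assumption with constant `L`. -/
def TVLip (d : Fin K → ℕ) (pa : Fin K → Finset (Fin K)) (L : ℝ) (μ : Measure (Pt d)) : Prop :=
  ∀ k : Fin K, 1 ≤ k.1 →
    (∃ κ : PtOn d (pa k) → Measure (PtOn d ({k} : Finset (Fin K))),
      IsCondD d μ (pa k) {k} κ ∧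
        ∀ x x', TVDist (κ x) (κ x') ≤ L * dist x x') ∧
    (∃ κ : PtOn d (pa k) → Measure (PtOn d (preOf pa k)),
      IsCondD d μ (pa k) (preOf pa k) κ ∧
        ∀ x x', TVDist (κ x) (κ x') ≤ L * dist x x') ∧
    (∃ κ : PtOn d ({k} : Finset (Fin K)) → Measure (PtOn d (pa k)),
      IsCondD d μ {k} (pa k) κ ∧
        ∀ x x', TVDist (κ x) (κ x') ≤ L * dist x x')

/-- Iterated construction of the graph product measure `∏_k κ_k(dx_k | x_pa(k))`. -/
def chainM (d : Fin K → ℕ) (pa : Fin K → Finset (Fin K))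
    (κ : ∀ k : Fin K, PtOn d (pa k) → Measure (PtOn d ({k} : Finset (Fin K)))) :
    ℕ → Measure (Pt d)
  | 0 => Measure.dirac (basePt d)
  | n + 1 =>
      if h : n < K then
        (chainM d pa κ n).bind fun x =>
          (κ ⟨n, h⟩ (projOn d (pa ⟨n, h⟩) x)).map fun y =>
            Function.update x ⟨n, h⟩ (y ⟨⟨n, h⟩, Finset.mem_singleton_self _⟩)
      else chainM d pa κ n

def graphProd (d : Fin K → ℕ) (pa : Fin K → Finset (Fin K))
    (κ : ∀ k : Fin K, PtOn d (pa k) → Measure (PtOn d ({k} : Finset (Fin K)))) :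
    Measure (Pt d) := chainM d pa κ K

/-- Completion of `x ∈ X_pa(k)` to a point of `X` (cell midpoints on `pa k`, `1/2` elsewhere). -/
def extendPt (d : Fin K → ℕ) (pa : Fin K → Finset (Fin K)) (η : ℕ) (k : Fin K)
    (x : PtOn d (pa k)) : Pt d :=
  fun j => if h : j ∈ pa k then (fun i => cMid η (x ⟨j, h⟩ i)) else fun _ => half

/-- The measure `ν^A` built from a choice `κ` of conditional kernels of `ν`. -/
def opA (d : Fin K → ℕ) (pa : Fin K → Finset (Fin K)) (η : ℕ) (ν : Measure (Pt d))
    (κ : ∀ k : Fin K, PtOn d (pa k) → Measure (PtOn d ({k} : Finset (Fin K)))) :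
    Measure (Pt d) :=
  graphProd d pa fun k x =>
    (condOn (ν.map (projOn d (pa k))) (cellOn d η (pa k) x) (midPtOn d η (pa k) x)).bind (κ k)

/-- The canonical (kernel-choice free) version of `ν^A`. -/
def opACanon (d : Fin K → ℕ) (pa : Fin K → Finset (Fin K)) (η : ℕ) (ν : Measure (Pt d)) :
    Measure (Pt d) :=
  graphProd d pa fun k x =>
    (condOn ν (projOn d (pa k) ⁻¹' cellOn d η (pa k) x) (extendPt d pa η k x)).map
      (projOn d ({k} : Finset (Fin K)))

/-- The kernel `μ^{bA}(dx_k | x_pa(k)) = Σ_{c_k} μ(c_k | c_pa(k)(x_pa(k))) μ_{k|c_k}(dx_k)`. -/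
def kerBA (d : Fin K → ℕ) (pa : Fin K → Finset (Fin K)) (η : ℕ) (μ : Measure (Pt d))
    (k : Fin K) (x : PtOn d (pa k)) : Measure (PtOn d ({k} : Finset (Fin K))) :=
  (((condOn μ (projOn d (pa k) ⁻¹' cellOn d η (pa k) x) (extendPt d pa η k x)).map
      (projOn d ({k} : Finset (Fin K)))).bind) fun z =>
    condOn (μ.map (projOn d ({k} : Finset (Fin K)))) (cellOn d η {k} z) (midPtOn d η {k} z)

/-- The measure `μ^{bA}`. -/
def opBA (d : Fin K → ℕ) (pa : Fin K → Finset (Fin K)) (η : ℕ) (μ : Measure (Pt d)) :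
    Measure (Pt d) := graphProd d pa (kerBA d pa η μ)

/-- The midpoint projection `μ^M` of `μ^{bA}`. -/
def opM (d : Fin K → ℕ) (pa : Fin K → Finset (Fin K)) (η : ℕ) (μ : Measure (Pt d)) :
    Measure (Pt d) := (opBA d pa η μ).map (midPt d η)

/-- The kernel of `μ^M` built from the conditional kernel `κ` of `μ`:
cell-average of `κ`, pushed to cell midpoints. -/
def kerM (d : Fin K → ℕ) (pa : Fin K → Finset (Fin K)) (η : ℕ) (μ : Measure (Pt d)) (k : Fin K)
    (κ : PtOn d (pa k) → Measure (PtOn d ({k} : Finset (Fin K)))) (y : PtOn d (pa k)) :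
    Measure (PtOn d ({k} : Finset (Fin K))) :=
  ((condOn (μ.map (projOn d (pa k))) (cellOn d η (pa k) y) (midPtOn d η (pa k) y)).bind κ).map
    (midPtOn d η ({k} : Finset (Fin K)))

/-- `m(dx_k | c_pa(k)(x))`: `m` conditioned on the parent cell of `x`, projected to node `k`. -/
def cellCondProj (d : Fin K → ℕ) (pa : Fin K → Finset (Fin K)) (η : ℕ) (m : Measure (Pt d))
    (k : Fin K) (x : Pt d) : Measure (PtOn d ({k} : Finset (Fin K))) :=
  (condOn m (projOn d (pa k) ⁻¹' cellOn d η (pa k) (projOn d (pa k) x)) (midPt d η x)).map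
    (projOn d ({k} : Finset (Fin K)))

/-- Minimax risk `V_Q(n)` for estimating a measure in `Q` from `n` i.i.d. samples,
in Wasserstein distance. -/
def minimax (d : Fin K → ℕ) (Q : Set (Measure (Pt d))) (n : ℕ) : ℝ :=
  ⨅ E : {E : (Fin n → Pt d) → Measure (Pt d) // Measurable E},
    ⨆ μ : Q, ∫ ω, Wass (μ : Measure (Pt d)) (E.1 ω) ∂(iid n (μ : Measure (Pt d)))

/-- Number of directed paths of length `ℓ` starting at `k` (following edge directions). -/
def pathCount (pa : Fin K → Finset (Fin K)) : ℕ → Fin K → ℕ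
  | 0, _ => 1
  | ℓ + 1, k => ∑ j ∈ Finset.univ.filter (fun j => k ∈ pa j), pathCount pa ℓ j

/-- The constant `M_{L,k} = 1 + Σ_{ℓ=1}^K a_{k,ℓ} L^ℓ`. -/
def MConst (pa : Fin K → Finset (Fin K)) (L : ℝ) (k : Fin K) : ℝ :=
  1 + ∑ ℓ ∈ Finset.Icc 1 K, (pathCount pa ℓ k : ℝ) * L ^ ℓ

/-- Lebesgue measure on `[0,1]^d = Π_k Π_i [0,1]`. -/
def lebPt (d : Fin K → ℕ) : Measure (Pt d) :=
  Measure.pi fun k => Measure.pi fun _ : Fin (d k) => (volume : Measure ℝ).comap Subtype.val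

/-- Product of the (one-node) marginals of `ν`. -/
def prodMarg (d : Fin K → ℕ) (ν : Measure (Pt d)) : Measure (Pt d) :=
  Measure.pi fun k => ν.map fun x => x k

/-- Cell average `f^ν` of `f` w.r.t. the product of the marginals of `ν`. -/
def fAvg (d : Fin K → ℕ) (η : ℕ) (ν : Measure (Pt d)) (f : Pt d → ℝ) (x : Pt d) : ℝ :=
  if prodMarg d ν (cylOf d η Finset.univ x) = 0 then 0
  else (∫ y in cylOf d η Finset.univ x, f y ∂prodMarg d ν) /
    (prodMarg d ν (cylOf d η Finset.univ x)).toReal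

/-- Combining points over two disjoint blocks of nodes. -/
def glue (d : Fin K → ℕ) {J J' : Finset (Fin K)} (p : PtOn d J × PtOn d J') :
    PtOn d (J ∪ J') := fun j =>
  if h : j.1 ∈ J then p.1 ⟨j.1, h⟩
  else p.2 ⟨j.1, by
    rcases Finset.mem_union.mp j.2 with h' | h'
    · exact absurd h' h
    · exact h'⟩

/-- `X_J` and `X_J'` are conditionally independent given `X_I` under `μ`. -/
def CondIndepOn (d : Fin K → ℕ) (μ : Measure (Pt d)) (I J J' : Finset (Fin K)) : Prop :=
  ∃ (κJ : PtOn d I → Measure (PtOn d J)) (κJ' : PtOn d I → Measure (PtOn d J')),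
    IsCondD d μ I J κJ ∧ IsCondD d μ I J' κJ' ∧
      IsCondD d μ I (J ∪ J') fun y => ((κJ y).prod (κJ' y)).map (glue d)

/-- The set `P_CI` of probability measures all of whose disjoint coordinate blocks are
conditionally independent given any disjoint nonempty block. -/
def PCI (d : Fin K → ℕ) : Set (Measure (Pt d)) :=
  {μ | IsProbabilityMeasure μ ∧
    ∀ I J J' : Finset (Fin K), I.Nonempty → Disjoint I J → Disjoint I J' → Disjoint J J' →
      CondIndepOn d μ I J J'}

end Graphical

section TwoBlocks

abbrev Vec (m : ℕ) : Type := Fin m → I01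

def cellV (η : ℕ) {m : ℕ} (x : Vec m) : Set (Vec m) :=
  {y | ∀ i, cIdx η (y i) = cIdx η (x i)}

def midV (η : ℕ) {m : ℕ} (x : Vec m) : Vec m := fun i => cMid η (x i)

/-- `ν^A` for two blocks and the graph `1 → 2`. -/
def opA2 {m₁ m₂ : ℕ} (η : ℕ) (ν : Measure (Vec m₁ × Vec m₂)) : Measure (Vec m₁ × Vec m₂) :=
  ν.bind fun p =>
    ((condOn ν (Prod.fst ⁻¹' cellV η p.1) (midV η p.1, midV η p.2)).map Prod.snd).map
      fun y => (p.1, y)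

/-- `μ^{bA}` for two blocks:  `Σ_{c₁,c₂} μ(c₁ × c₂) (μ_{1|c₁} ⊗ μ_{2|c₂})`. -/
def opBA2 {m₁ m₂ : ℕ} (η : ℕ) (μ : Measure (Vec m₁ × Vec m₂)) : Measure (Vec m₁ × Vec m₂) :=
  μ.bind fun p =>
    (condOn (μ.map Prod.fst) (cellV η p.1) (midV η p.1)).prod
      (condOn (μ.map Prod.snd) (cellV η p.2) (midV η p.2))

/-- The kernel `μ^{bA}(dx₂ | x₁) = Σ_{c₂} μ(c₂ | c₁(x₁)) μ_{2|c₂}(dx₂)`. -/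
def kerBA2 {m₁ m₂ : ℕ} (η : ℕ) (μ : Measure (Vec m₁ × Vec m₂)) (x₁ : Vec m₁) :
    Measure (Vec m₂) :=
  (((condOn μ (Prod.fst ⁻¹' cellV η x₁) (midV η x₁, fun _ => half)).map Prod.snd).bind) fun z =>
    condOn (μ.map Prod.snd) (cellV η z) (midV η z)

/-- `κ` is a conditional distribution of the second block given the first, under `μ`. -/
def IsCD2 {m₁ m₂ : ℕ} (μ : Measure (Vec m₁ × Vec m₂)) (κ : Vec m₁ → Measure (Vec m₂)) : Prop :=
  Measurable κ ∧ (∀ x, IsProbabilityMeasure (κ x)) ∧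
    ∀ (A : Set (Vec m₁)) (B : Set (Vec m₂)), MeasurableSet A → MeasurableSet B →
      μ (A ×ˢ B) = ∫⁻ x in A, κ x B ∂(μ.map Prod.fst)

end TwoBlocks

end

/-!
`ν^A` is built node by node, resampling `x_k` from the kernel `ν^A(dx_k | x_pa(k))`. By induction,
after the first `n` nodes the cells of every fully connected set of nodes `< n` carry their
`ν`-mass. For the next node `k`, the parent set `pa k` is such a set (no colliders), so almost
surely the current point lies in a parent cell `c` with `ν(c) > 0`; on it the kernel
`∫ ν(dx_k | x̃) ν|_c(dx̃)` is the law of `x_k` under `ν(· | c)`, for every version of the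
conditional kernel. This gives independence of the choice. Resampling `x_k` from `ν(· | c)`
preserves the cell law of a fully connected `I ∋ k`, since `I \ {k} ⊆ pa k`, by the law of total
probability over the parent cells; for `k ∉ I` the cells of `I` do not move.
-/

open ProbabilityTheory

section CountableFibers

variable {α β γ : Type*} [MeasurableSpace α] [MeasurableSpace β] [MeasurableSpace γ]

theorem MeasureTheory.Measure.map_bind {μ : Measure α} {κ : α → Measure β}
    (hκ : AEMeasurable κ μ) {f : β → γ} (hf : Measurable f) :
    (μ.bind κ).map f = μ.bind fun a => (κ a).map f := by
  ext s hs
  rw [Measure.map_apply hf hs, Measure.bind_apply (hf hs) hκ,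
    Measure.bind_apply (f := fun a => (κ a).map f) hs
      ((Measure.measurable_map f hf).comp_aemeasurable hκ)]
  simp_rw [Measure.map_apply hf hs]

variable [Countable β] [MeasurableSingletonClass β] {g : α → β}

theorem measurable_of_factors_through (hg : Measurable g) {f : α → γ}
    (hf : ∀ x y, g x = g y → f x = f y) : Measurable f := by
  intro t _
  have hpre : f ⁻¹' t = g ⁻¹' (g '' (f ⁻¹' t)) := by
    refine (Set.subset_preimage_image g _).antisymm ?_
    rintro y ⟨x, hx, hxy⟩
    exact (hf x y hxy ▸ hx : f y ∈ t)
  rw [hpre]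
  exact hg (Set.to_countable _).measurableSet

theorem ae_measure_fiber_ne_zero (hg : Measurable g) {μ ν : Measure α}
    (h : μ.map g = ν.map g) : ∀ᵐ x ∂μ, ν (g ⁻¹' {g x}) ≠ 0 := by
  have hS : MeasurableSet {c | ν (g ⁻¹' {c}) = 0} := (Set.to_countable _).measurableSet
  rw [ae_iff]
  simp only [ne_eq, not_not]
  change μ (g ⁻¹' {c | ν (g ⁻¹' {c}) = 0}) = 0
  rw [← Measure.map_apply hg hS, h, Measure.map_apply hg hS,
    measure_preimage_eq_zero_iff_of_countable (Set.to_countable _)]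
  exact fun c hc => hc

theorem measurable_cond_fiber (hg : Measurable g) (ν : Measure α) :
    Measurable fun x => ν[|g ⁻¹' {g x}] :=
  (measurable_of_countable fun c => ν[|g ⁻¹' {c}]).comp hg

theorem bind_cond_fiber_of_map_eq (hg : Measurable g) {μ ν : Measure α} [IsFiniteMeasure ν]
    (h : μ.map g = ν.map g) : μ.bind (fun x => ν[|g ⁻¹' {g x}]) = ν := by
  ext s hs
  have hq : Measurable fun c => ν[|g ⁻¹' {c}] s := measurable_of_countable _
  rw [Measure.bind_apply hs (measurable_cond_fiber hg ν).aemeasurable,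
    ← lintegral_map hq hg, h, lintegral_countable']
  calc ∑' c, ν[|g ⁻¹' {c}] s * ν.map g {c}
      = ∑' c, ν.restrict s (g ⁻¹' {c}) := by
        congr 1 with c
        rw [Measure.map_apply hg (measurableSet_singleton c),
          cond_mul_eq_inter (hg (measurableSet_singleton c)), Measure.restrict_apply' hs]
    _ = ν s := by
        rw [← tsum_univ, tsum_measure_preimage_singleton Set.countable_univ
          (fun c _ => hg (measurableSet_singleton c)), Set.preimage_univ,
          Measure.restrict_apply_univ]

end CountableFibers

section Kernels

variable {Ω α β γ : Type*} [MeasurableSpace Ω] [MeasurableSpace α] [MeasurableSpace β]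
  [MeasurableSpace γ]

theorem measurable_map_of_measurable_uncurry {κ : α → Measure β} (hκ : Measurable κ)
    (hp : ∀ a, IsProbabilityMeasure (κ a)) {f : α → β → γ}
    (hf : Measurable (Function.uncurry f)) :
    Measurable fun a => (κ a).map (f a) := by
  let κ' : Kernel α β := ⟨κ, hκ⟩
  have : IsMarkovKernel κ' := ⟨hp⟩
  refine Measure.measurable_of_measurable_coe _ fun s hs => ?_
  convert Kernel.measurable_kernel_prodMk_left (κ := κ') (hf hs) using 1
  exact funext fun a => Measure.map_apply (hf.comp measurable_prodMk_left) hs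

theorem bind_cond_map_eq_map_cond {X : Ω → α} {Y : Ω → β} {m : Measure Ω}
    (hX : Measurable X) (hY : Measurable Y) {κ : α → Measure β} (hκ : Measurable κ)
    (hκm : ∀ A B, MeasurableSet A → MeasurableSet B →
      m (X ⁻¹' A ∩ Y ⁻¹' B) = ∫⁻ a in A, κ a B ∂m.map X)
    {A : Set α} (hA : MeasurableSet A) : (m.map X)[|A].bind κ = (m[|X ⁻¹' A]).map Y := by
  ext B hB
  rw [Measure.bind_apply hB hκ.aemeasurable, ProbabilityTheory.cond, lintegral_smul_measure,
    ← hκm A B hA hB, Measure.map_apply hX hA, Measure.map_apply hY hB, cond_apply (hX hA),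
    smul_eq_mul]

end Kernels

noncomputable section

section DyadicCells

variable {K : ℕ} (d : Fin K → ℕ) (η : ℕ)

theorem measurable_cIdx : Measurable (cIdx η) :=
  (measurable_of_countable fun n : ℕ => min n (2 ^ η - 1)).comp
    (Nat.measurable_floor.comp (measurable_subtype_coe.mul_const _))

theorem cMid_eq_of_cIdx_eq {s t : I01} (h : cIdx η s = cIdx η t) : cMid η s = cMid η t := by
  simp only [cMid, h]

theorem measurable_projOn (I : Finset (Fin K)) : Measurable (projOn d I) :=
  measurable_pi_lambda _ fun j => measurable_pi_apply j.1

-- The cells of `A_I` are the fibres of this map into a countable type.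
def cellIndex (I : Finset (Fin K)) (y : PtOn d I) : (j : I) → Fin (d j.1) → ℕ :=
  fun j i => cIdx η (y j i)

def cylIndex (I : Finset (Fin K)) : Pt d → (j : I) → Fin (d j.1) → ℕ :=
  cellIndex d η I ∘ projOn d I

theorem measurable_cellIndex (I : Finset (Fin K)) : Measurable (cellIndex d η I) :=
  measurable_pi_lambda _ fun j => measurable_pi_lambda _ fun i =>
    (measurable_cIdx η).comp ((measurable_pi_apply i).comp (measurable_pi_apply j))

theorem measurable_cylIndex (I : Finset (Fin K)) : Measurable (cylIndex d η I) :=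
  (measurable_cellIndex d η I).comp (measurable_projOn d I)

theorem cellOn_eq_preimage (I : Finset (Fin K)) (y : PtOn d I) :
    cellOn d η I y = cellIndex d η I ⁻¹' {cellIndex d η I y} := by
  ext z
  simp only [cellOn, cellIndex, Set.mem_ofPred_eq, Set.mem_preimage, Set.mem_singleton_iff,
    funext_iff]

theorem measurableSet_cellOn (I : Finset (Fin K)) (y : PtOn d I) :
    MeasurableSet (cellOn d η I y) := by
  rw [cellOn_eq_preimage]
  exact measurable_cellIndex d η I (measurableSet_singleton _)

theorem preimage_projOn_cellOn (I : Finset (Fin K)) (x : Pt d) :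
    projOn d I ⁻¹' cellOn d η I (projOn d I x) = cylOf d η I x := by
  ext z
  simp [cellOn, cylOf, projOn]

theorem cylOf_eq_preimage (I : Finset (Fin K)) (x : Pt d) :
    cylOf d η I x = cylIndex d η I ⁻¹' {cylIndex d η I x} := by
  rw [← preimage_projOn_cellOn, cellOn_eq_preimage, cylIndex, Set.preimage_comp]
  rfl

theorem measurableSet_cylOf (I : Finset (Fin K)) (x : Pt d) : MeasurableSet (cylOf d η I x) := by
  rw [cylOf_eq_preimage]
  exact measurable_cylIndex d η I (measurableSet_singleton _)

end DyadicCells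

section CellKernel

variable {K : ℕ} (d : Fin K → ℕ) (pa : Fin K → Finset (Fin K)) (η : ℕ)
  (ν : Measure (Pt d))

theorem condOn_eq_cond {α : Type*} [MeasurableSpace α] {m : Measure α} {s : Set α} (x₀ : α)
    (h : m s ≠ 0) : condOn m s x₀ = m[|s] := by
  rw [condOn, if_neg h, ProbabilityTheory.cond]

theorem isProbabilityMeasure_condOn {α : Type*} [MeasurableSpace α] (m : Measure α)
    [IsFiniteMeasure m] (s : Set α) (x₀ : α) : IsProbabilityMeasure (condOn m s x₀) := by
  by_cases h : m s = 0
  · rw [condOn, if_pos h]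
    infer_instance
  · rw [condOn_eq_cond x₀ h]
    exact cond_isProbabilityMeasure h

/-- The kernel `ν^A(dx_k | x_pa(k))`; `opA` is its graph product. -/
def kerA (κ : ∀ k : Fin K, PtOn d (pa k) → Measure (PtOn d ({k} : Finset (Fin K)))) (k : Fin K)
    (y : PtOn d (pa k)) : Measure (PtOn d ({k} : Finset (Fin K))) :=
  (condOn (ν.map (projOn d (pa k))) (cellOn d η (pa k) y) (midPtOn d η (pa k) y)).bind (κ k)

variable {κ : ∀ k : Fin K, PtOn d (pa k) → Measure (PtOn d ({k} : Finset (Fin K)))} {k : Fin K}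

theorem measurable_kerA (hκ : Measurable (κ k)) : Measurable (kerA d pa η ν κ k) := by
  refine (Measure.measurable_bind' hκ).comp
    (measurable_of_factors_through (measurable_cellIndex d η (pa k)) fun y y' h => ?_)
  have hmid : midPtOn d η (pa k) y = midPtOn d η (pa k) y' :=
    funext fun j => funext fun i => cMid_eq_of_cIdx_eq η (congrFun (congrFun h j) i)
  rw [cellOn_eq_preimage, cellOn_eq_preimage d η (pa k) y', h, hmid]

theorem isProbabilityMeasure_kerA [IsFiniteMeasure ν] (hκ : IsCondD d ν (pa k) {k} (κ k))
    (y : PtOn d (pa k)) : IsProbabilityMeasure (kerA d pa η ν κ k y) :=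
  have := isProbabilityMeasure_condOn (ν.map (projOn d (pa k))) (cellOn d η _ y)
    (midPtOn d η (pa k) y)
  isProbabilityMeasure_bind hκ.1.aemeasurable (ae_of_all _ hκ.2.1)

theorem kerA_eq_map_cond (hκ : IsCondD d ν (pa k) {k} (κ k)) (x : Pt d)
    (hx : ν (cylOf d η (pa k) x) ≠ 0) :
    kerA d pa η ν κ k (projOn d (pa k) x) = (ν[|cylOf d η (pa k) x]).map (projOn d {k}) := by
  have hcell : ν.map (projOn d (pa k)) (cellOn d η (pa k) (projOn d (pa k) x)) ≠ 0 := by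
    rwa [Measure.map_apply (measurable_projOn d _) (measurableSet_cellOn d η _ _),
      preimage_projOn_cellOn]
  rw [kerA, condOn_eq_cond _ hcell, bind_cond_map_eq_map_cond (measurable_projOn d _)
    (measurable_projOn d _) hκ.1 hκ.2.2 (measurableSet_cellOn d η _ _), preimage_projOn_cellOn]

end CellKernel

section GraphProduct

variable {K : ℕ} (d : Fin K → ℕ) (pa : Fin K → Finset (Fin K))

def updateAt (k : Fin K) (x : Pt d) (y : PtOn d ({k} : Finset (Fin K))) : Pt d :=
  Function.update x k (y ⟨k, Finset.mem_singleton_self k⟩)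

theorem measurable_updateAt_uncurry (k : Fin K) :
    Measurable (Function.uncurry (updateAt d k)) := by
  have : Measurable fun p : Pt d × PtOn d ({k} : Finset (Fin K)) =>
      p.2 ⟨k, Finset.mem_singleton_self k⟩ := (measurable_pi_apply _).comp measurable_snd
  exact measurable_update'.comp (measurable_fst.prodMk this)

theorem measurable_updateAt (k : Fin K) (x : Pt d) : Measurable (updateAt d k x) :=
  (measurable_update x).comp (measurable_pi_apply _)

theorem projOn_updateAt_of_notMem {I : Finset (Fin K)} {k : Fin K} (hk : k ∉ I) (x : Pt d)
    (y : PtOn d ({k} : Finset (Fin K))) : projOn d I (updateAt d k x y) = projOn d I x :=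
  funext fun j => Function.update_of_ne (ne_of_mem_of_not_mem j.2 hk) _ _

theorem cylIndex_updateAt_of_mem_cylOf (η : ℕ) {I : Finset (Fin K)} {k : Fin K}
    (hI : ∀ j ∈ I, j ≠ k → j ∈ pa k) {x z : Pt d} (hz : z ∈ cylOf d η (pa k) x) :
    cylIndex d η I (updateAt d k x (projOn d {k} z)) = cylIndex d η I z := by
  funext ⟨j, hj⟩ i
  by_cases hjk : j = k
  · subst hjk
    simp [cylIndex, cellIndex, projOn, updateAt]
  · simp only [cylIndex, Function.comp_apply, cellIndex, projOn, updateAt,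
      Function.update_of_ne hjk]
    exact (hz j (hI j hj hjk) i).symm

def resample (κt : ∀ k : Fin K, PtOn d (pa k) → Measure (PtOn d ({k} : Finset (Fin K))))
    (k : Fin K) (x : Pt d) : Measure (Pt d) :=
  (κt k (projOn d (pa k) x)).map (updateAt d k x)

variable {κt : ∀ k : Fin K, PtOn d (pa k) → Measure (PtOn d ({k} : Finset (Fin K)))}

theorem chainM_succ {n : ℕ} (hn : n < K) :
    chainM d pa κt (n + 1) = (chainM d pa κt n).bind (resample d pa κt ⟨n, hn⟩) := by
  rw [chainM, dif_pos hn]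
  rfl

theorem measurable_resample {k : Fin K} (hm : Measurable (κt k))
    (hp : ∀ y, IsProbabilityMeasure (κt k y)) : Measurable (resample d pa κt k) :=
  measurable_map_of_measurable_uncurry (hm.comp (measurable_projOn d _)) (fun _ => hp _)
    (measurable_updateAt_uncurry d k)

theorem map_cylIndex_bind_resample_of_notMem (η : ℕ) {I : Finset (Fin K)} {k : Fin K}
    (hk : k ∉ I) (hm : Measurable (κt k)) (hp : ∀ y, IsProbabilityMeasure (κt k y))
    (μ : Measure (Pt d)) :
    (μ.bind (resample d pa κt k)).map (cylIndex d η I) = μ.map (cylIndex d η I) := by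
  have hdirac : ∀ x, (resample d pa κt k x).map (cylIndex d η I) =
      Measure.dirac (cylIndex d η I x) := fun x => by
    have hconst : cylIndex d η I ∘ updateAt d k x = fun _ => cylIndex d η I x :=
      funext fun y => congrArg (cellIndex d η I) (projOn_updateAt_of_notMem d hk x y)
    rw [resample, Measure.map_map (measurable_cylIndex d η I) (measurable_updateAt d k x),
      hconst, Measure.map_const, measure_univ, one_smul]
  rw [Measure.map_bind (measurable_resample d pa hm hp).aemeasurable (measurable_cylIndex d η I),
    funext hdirac, Measure.bind_dirac_eq_map _ (measurable_cylIndex d η I)]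

variable (η : ℕ) {ν : Measure (Pt d)}
  {κ : ∀ k : Fin K, PtOn d (pa k) → Measure (PtOn d ({k} : Finset (Fin K)))} {k : Fin K}
  {μ : Measure (Pt d)}

theorem ae_resample_kerA_eq (hκ : IsCondD d ν (pa k) {k} (κ k))
    (hμ : μ.map (cylIndex d η (pa k)) = ν.map (cylIndex d η (pa k))) :
    ∀ᵐ x ∂μ, resample d pa (kerA d pa η ν κ) k x =
      (ν[|cylOf d η (pa k) x]).map (updateAt d k x ∘ projOn d {k}) := by
  filter_upwards [ae_measure_fiber_ne_zero (measurable_cylIndex d η _) hμ] with x hx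
  rw [← cylOf_eq_preimage] at hx
  rw [resample, kerA_eq_map_cond d pa η ν hκ x hx,
    Measure.map_map (measurable_updateAt d k x) (measurable_projOn d _)]

theorem map_cylIndex_bind_resample_kerA [IsFiniteMeasure ν] (hκ : IsCondD d ν (pa k) {k} (κ k))
    (hμ : μ.map (cylIndex d η (pa k)) = ν.map (cylIndex d η (pa k))) {I : Finset (Fin K)}
    (hI : ∀ j ∈ I, j ≠ k → j ∈ pa k) :
    (μ.bind (resample d pa (kerA d pa η ν κ) k)).map (cylIndex d η I) =
      ν.map (cylIndex d η I) := by
  have hgI := measurable_cylIndex d η I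
  have hgpa := measurable_cylIndex d η (pa k)
  have hstep : ∀ᵐ x ∂μ, (resample d pa (kerA d pa η ν κ) k x).map (cylIndex d η I) =
      (ν[|cylIndex d η (pa k) ⁻¹' {cylIndex d η (pa k) x}]).map (cylIndex d η I) := by
    filter_upwards [ae_resample_kerA_eq d pa η hκ hμ] with x hx
    rw [hx, Measure.map_map hgI ((measurable_updateAt d k x).comp (measurable_projOn d _)),
      ← cylOf_eq_preimage]
    refine Measure.map_congr ?_
    filter_upwards [ae_cond_mem (measurableSet_cylOf d η (pa k) x)] with z hz
    exact cylIndex_updateAt_of_mem_cylOf d pa η hI hz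
  rw [Measure.map_bind (measurable_resample d pa (measurable_kerA d pa η ν hκ.1)
      (isProbabilityMeasure_kerA d pa η ν hκ)).aemeasurable hgI,
    Measure.bind_congr_right hstep,
    ← Measure.map_bind (measurable_cond_fiber hgpa ν).aemeasurable hgI,
    bind_cond_fiber_of_map_eq hgpa hμ]

variable [IsProbabilityMeasure ν]

theorem map_cylIndex_chainM_kerA (hsort : SortedGraph pa) (hnc : NoColliders pa)
    (hκ : ∀ k, IsCondD d ν (pa k) {k} (κ k)) {n : ℕ} (hn : n ≤ K) {I : Finset (Fin K)}
    (hI : FullConn pa I) (hIn : ∀ j ∈ I, (j : ℕ) < n) :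
    (chainM d pa (kerA d pa η ν κ) n).map (cylIndex d η I) = ν.map (cylIndex d η I) := by
  induction n generalizing I with
  | zero =>
    obtain rfl : I = ∅ := Finset.eq_empty_of_forall_notMem fun j hj => by simpa using hIn j hj
    have hconst : cylIndex d η ∅ = fun _ => cylIndex d η ∅ (basePt d) :=
      funext fun _ => Subsingleton.elim _ _
    rw [chainM, hconst, Measure.map_const, Measure.map_const, measure_univ, measure_univ]
  | succ n ih =>
    set k : Fin K := ⟨n, hn⟩
    have hlt : ∀ j ∈ I, j ≠ k → j < k := fun j hj hjk =>
      Fin.lt_def.mpr (lt_of_le_of_ne (Nat.lt_succ_iff.mp (hIn j hj)) (Fin.val_ne_of_ne hjk))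
    rw [chainM_succ d pa hn]
    by_cases hk : k ∈ I
    · exact map_cylIndex_bind_resample_kerA d pa η (hκ k) (ih (by omega) (hnc k) (hsort k))
        fun j hj hjk => hI j hj k hk (hlt j hj hjk)
    · rw [map_cylIndex_bind_resample_of_notMem d pa η hk (measurable_kerA d pa η ν (hκ k).1)
        (isProbabilityMeasure_kerA d pa η ν (hκ k))]
      exact ih (by omega) hI fun j hj => hlt j hj (ne_of_mem_of_not_mem hj hk)

theorem chainM_kerA_congr (hsort : SortedGraph pa) (hnc : NoColliders pa)
    (hκ : ∀ k, IsCondD d ν (pa k) {k} (κ k))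
    {κ' : ∀ k : Fin K, PtOn d (pa k) → Measure (PtOn d ({k} : Finset (Fin K)))}
    (hκ' : ∀ k, IsCondD d ν (pa k) {k} (κ' k)) {n : ℕ} (hn : n ≤ K) :
    chainM d pa (kerA d pa η ν κ) n = chainM d pa (kerA d pa η ν κ') n := by
  induction n with
  | zero => rw [chainM, chainM]
  | succ n ih =>
    set k : Fin K := ⟨n, hn⟩
    have hpa := map_cylIndex_chainM_kerA d pa η hsort hnc hκ (by omega) (hnc k) (hsort k)
    rw [chainM_succ d pa hn, chainM_succ d pa hn, ← ih (by omega)]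
    refine Measure.bind_congr_right ?_
    filter_upwards [ae_resample_kerA_eq d pa η (hκ k) hpa,
      ae_resample_kerA_eq d pa η (hκ' k) hpa] with x hx hx'
    rw [hx, hx']

end GraphProduct

end

/-- Lemma: `ν^A` is well defined.
If `G` has no colliders, then `ν^A` does not depend on the choice of the regular conditional
kernels of `ν`, and for every fully connected `I ⊆ {1,…,K}` and every cell `c_I` of `A_I`
one has `ν^A(c_I) = ν(c_I)`. -/
theorem stmt4 {K : ℕ} (d : Fin K → ℕ) (pa : Fin K → Finset (Fin K))
    (hsort : SortedGraph pa) (hnc : NoColliders pa) (η : ℕ)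
    (ν : Measure (Pt d)) (hν : IsProbabilityMeasure ν) :
    (∀ κ κ' : ∀ k : Fin K, PtOn d (pa k) → Measure (PtOn d ({k} : Finset (Fin K))),
      (∀ k, IsCondD d ν (pa k) {k} (κ k)) → (∀ k, IsCondD d ν (pa k) {k} (κ' k)) →
        opA d pa η ν κ = opA d pa η ν κ') ∧
    (∀ κ : ∀ k : Fin K, PtOn d (pa k) → Measure (PtOn d ({k} : Finset (Fin K))),
      (∀ k, IsCondD d ν (pa k) {k} (κ k)) →
        ∀ I : Finset (Fin K), FullConn pa I → ∀ x : Pt d,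
          opA d pa η ν κ (cylOf d η I x) = ν (cylOf d η I x)) := by
  refine ⟨fun κ κ' hκ hκ' => chainM_kerA_congr d pa η hsort hnc hκ hκ' le_rfl,
    fun κ hκ I hI x => ?_⟩
  have hg := measurable_cylIndex d η I
  rw [cylOf_eq_preimage, ← Measure.map_apply hg (measurableSet_singleton _),
    ← Measure.map_apply hg (measurableSet_singleton _)]
  exact congrArg (fun m : Measure _ => m _)
    (map_cylIndex_chainM_kerA d pa η hsort hnc hκ le_rfl hI fun j _ => j.2)
end

section
/- Let 0 < a < b, let μ ∈ P_G, and assume that μ has a density with respect to Lebesgue measure on [0,1]^d which is D-Lipschitz and takes values in the interval [a, b]. Then μ satisfies the TV-Lipschitz kernel assumption with constant L = D/a + b/a². -/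
open MeasureTheory Finset
open scoped ENNReal NNReal

/-!
Split a point of `[0,1]^d` as `(x_I, x_{Iᶜ})`. Lebesgue measure is the product of the Lebesgue
measures of the two blocks, so under `μ = f · Leb` the law of `x_{Iᶜ}` given `x_I = y` has density
`f(y, ·) / ∫ f(y, ·)`, and for `J ⊆ Iᶜ` the law of `x_J` is its image. Moving `y` changes
`f(y, ·)` pointwise, hence also its mass, by at most `D‖y - y'‖`; as the mass is at least `a`,
the normalized densities differ in `L¹` by at most `2D‖y - y'‖ / a`, and total variation is half
of that. The three kernels of the assumption are of this form, with
`(I, J) = (pa k, {k}), (pa k, pre k), ({k}, pa k)`, disjoint because the graph is sorted.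
-/

lemma TVDist_le_of_forall {α : Type*} [MeasurableSpace α] {μ ν : Measure α} {c : ℝ}
    (hc : 0 ≤ c)
    (h : ∀ g : α → ℝ, Measurable g → (∀ x, |g x| ≤ 1 / 2) → ∫ x, g x ∂μ - ∫ x, g x ∂ν ≤ c) :
    TVDist μ ν ≤ c :=
  Real.sSup_le (by rintro r ⟨g, hg, hgb, rfl⟩; exact h g hg hgb) hc

lemma integral_withDensity_ofReal_eq {α : Type*} [MeasurableSpace α] {μ : Measure α}
    {p : α → ℝ} (hpm : Measurable p) (hp : ∀ x, 0 ≤ p x) (g : α → ℝ) :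
    ∫ x, g x ∂μ.withDensity (fun x => ENNReal.ofReal (p x)) = ∫ x, p x * g x ∂μ := by
  rw [← Function.comp_def ENNReal.ofReal p, integral_withDensity_eq_integral_toReal_smul
    (ENNReal.measurable_ofReal.comp hpm) (ae_of_all _ fun _ => ENNReal.ofReal_lt_top)]
  simp only [Function.comp_apply, ENNReal.toReal_ofReal (hp _), smul_eq_mul]

lemma integral_withDensity_sub_le_half_integral_abs {α : Type*} [MeasurableSpace α]
    {μ : Measure α} {p q : α → ℝ} (hpm : Measurable p) (hqm : Measurable q)
    (hp : ∀ x, 0 ≤ p x) (hq : ∀ x, 0 ≤ q x) (hpi : Integrable p μ) (hqi : Integrable q μ)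
    {g : α → ℝ} (hg : Measurable g) (hgb : ∀ x, |g x| ≤ 1 / 2) :
    ∫ x, g x ∂μ.withDensity (fun x => ENNReal.ofReal (p x))
      - ∫ x, g x ∂μ.withDensity (fun x => ENNReal.ofReal (q x))
      ≤ (∫ x, |p x - q x| ∂μ) / 2 := by
  have hbdd : ∀ {r : α → ℝ}, Integrable r μ → Integrable (fun x => r x * g x) μ := fun hr =>
    hr.mul_bdd hg.aestronglyMeasurable (ae_of_all _ fun x => (Real.norm_eq_abs _).le.trans (hgb x))
  rw [integral_withDensity_ofReal_eq hpm hp, integral_withDensity_ofReal_eq hqm hq,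
    ← integral_sub (hbdd hpi) (hbdd hqi), ← integral_div]
  refine integral_mono ((hbdd hpi).sub (hbdd hqi)) ((hpi.sub hqi).abs.div_const 2) fun x => ?_
  calc p x * g x - q x * g x ≤ |p x - q x| * |g x| := by
        rw [← sub_mul, ← abs_mul]; exact le_abs_self _
    _ ≤ |p x - q x| / 2 := by
        rw [div_eq_mul_one_div]; exact mul_le_mul_of_nonneg_left (hgb x) (abs_nonneg _)

lemma abs_div_sub_div_le {f g F G : ℝ} (hg : 0 ≤ g) (hF : 0 < F) (hG : 0 < G) :
    |f / F - g / G| ≤ |f - g| / F + g * (|F - G| / (F * G)) := by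
  have e : f / F - g / G = (f - g) / F + g * ((G - F) / (F * G)) := by
    field_simp; ring
  rw [e]
  refine (abs_add_le _ _).trans_eq ?_
  rw [abs_div, abs_of_pos hF, abs_mul, abs_of_nonneg hg, abs_div, abs_of_pos (mul_pos hF hG),
    abs_sub_comm G F]

lemma integral_abs_div_integral_sub_le {α : Type*} [MeasurableSpace α] {μ : Measure α}
    [IsProbabilityMeasure μ] {f g : α → ℝ} {a δ : ℝ} (ha : 0 < a)
    (hf : Integrable f μ) (hg : Integrable g μ) (hg0 : ∀ x, 0 ≤ g x)
    (haf : a ≤ ∫ x, f x ∂μ) (hag : a ≤ ∫ x, g x ∂μ) (hδ : ∀ x, |f x - g x| ≤ δ) :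
    ∫ x, |f x / ∫ x, f x ∂μ - g x / ∫ x, g x ∂μ| ∂μ ≤ 2 * δ / a := by
  set F := ∫ x, f x ∂μ
  set G := ∫ x, g x ∂μ
  set E := ∫ x, |f x - g x| ∂μ
  have hF : 0 < F := ha.trans_le haf
  have hG : 0 < G := ha.trans_le hag
  have hE : E ≤ δ := by
    simpa using integral_mono (hf.sub hg).abs (integrable_const δ) hδ
  have hFG : |F - G| ≤ E := by
    rw [← integral_sub hf hg]; exact abs_integral_le_integral_abs
  have hE0 : 0 ≤ E := integral_nonneg fun _ => abs_nonneg _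
  have hi₁ : Integrable (fun x => |f x - g x| / F) μ := (hf.sub hg).abs.div_const F
  have hi₂ : Integrable (fun x => g x * (|F - G| / (F * G))) μ := hg.mul_const _
  calc ∫ x, |f x / F - g x / G| ∂μ
      ≤ ∫ x, (|f x - g x| / F + g x * (|F - G| / (F * G))) ∂μ :=
        integral_mono ((hf.div_const F).sub (hg.div_const G)).abs (hi₁.add hi₂)
          fun x => abs_div_sub_div_le (hg0 x) hF hG
    _ = (E + |F - G|) / F := by
        rw [integral_add hi₁ hi₂, integral_div, integral_mul_const]
        change E / F + G * (|F - G| / (F * G)) = _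
        field_simp
    _ ≤ 2 * δ / a := div_le_div₀ (by linarith) (by linarith) ha haf

section DensityKernel

open ProbabilityTheory

variable {Y Z : Type*} [MeasurableSpace Y] [MeasurableSpace Z]

noncomputable def sliceIntegral (β : Measure Z) (F : Y × Z → ℝ) (y : Y) : ℝ := ∫ z, F (y, z) ∂β

noncomputable def densityCondKernel (β : Measure Z) (F : Y × Z → ℝ) (y : Y) : Measure Z :=
  β.withDensity fun z => ENNReal.ofReal (F (y, z) / sliceIntegral β F y)

variable {β : Measure Z} {F : Y × Z → ℝ}

lemma measurable_sliceIntegral [SFinite β] (hFm : Measurable F) :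
    Measurable (sliceIntegral β F) :=
  hFm.stronglyMeasurable.integral_prod_right'.measurable

lemma measurable_densityCondKernel [SFinite β] (hFm : Measurable F) :
    Measurable (densityCondKernel β F) := by
  have hd : Measurable (Function.uncurry fun y z =>
      ENNReal.ofReal (F (y, z) / sliceIntegral β F y)) :=
    ENNReal.measurable_ofReal.comp (hFm.div ((measurable_sliceIntegral hFm).comp measurable_fst))
  have e : densityCondKernel β F = ⇑((Kernel.const Y β).withDensity fun y z =>
      ENNReal.ofReal (F (y, z) / sliceIntegral β F y)) := by
    funext y
    rw [Kernel.withDensity_apply _ hd, Kernel.const_apply]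
    rfl
  rw [e]
  exact Kernel.measurable _

lemma withDensity_prod_apply_prod (α : Measure Y) [SFinite α] [SFinite β] (hFm : Measurable F)
    {A : Set Y} {B : Set Z} (hA : MeasurableSet A) (hB : MeasurableSet B) :
    (α.prod β).withDensity (fun p => ENNReal.ofReal (F p)) (A ×ˢ B)
      = ∫⁻ y in A, ∫⁻ z in B, ENNReal.ofReal (F (y, z)) ∂β ∂α := by
  rw [withDensity_apply _ (hA.prod hB), ← Measure.prod_restrict,
    lintegral_prod (fun p => ENNReal.ofReal (F p))
      (ENNReal.measurable_ofReal.comp hFm).aemeasurable]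

variable {a b : ℝ} [IsProbabilityMeasure β]

lemma integrable_slice (ha : 0 < a) (hFm : Measurable F) (hF : ∀ p, F p ∈ Set.Icc a b)
    (y : Y) : Integrable (fun z => F (y, z)) β :=
  Integrable.of_bound (hFm.comp measurable_prodMk_left).aestronglyMeasurable b
    (ae_of_all _ fun z => by
      rw [Real.norm_eq_abs, abs_of_pos (ha.trans_le (hF _).1)]; exact (hF _).2)

lemma sliceIntegral_mem_Icc (ha : 0 < a) (hFm : Measurable F) (hF : ∀ p, F p ∈ Set.Icc a b)
    (y : Y) : sliceIntegral β F y ∈ Set.Icc a b := by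
  constructor
  · simpa [sliceIntegral] using integral_mono (integrable_const (μ := β) a)
      (integrable_slice ha hFm hF y) fun z => (hF (y, z)).1
  · simpa [sliceIntegral] using integral_mono (integrable_slice ha hFm hF y)
      (integrable_const (μ := β) b) fun z => (hF (y, z)).2

lemma ofReal_sliceIntegral_mul_densityCondKernel_apply (ha : 0 < a) (hFm : Measurable F)
    (hF : ∀ p, F p ∈ Set.Icc a b) (y : Y) {B : Set Z} (hB : MeasurableSet B) :
    ENNReal.ofReal (sliceIntegral β F y) * densityCondKernel β F y B
      = ∫⁻ z in B, ENNReal.ofReal (F (y, z)) ∂β := by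
  have hG := ha.trans_le (sliceIntegral_mem_Icc (β := β) ha hFm hF y).1
  simp_rw [densityCondKernel, withDensity_apply _ hB, ENNReal.ofReal_div_of_pos hG,
    div_eq_mul_inv]
  rw [lintegral_mul_const' _ _ (by simpa using hG), mul_comm, mul_assoc,
    ENNReal.inv_mul_cancel (by simpa using hG) ENNReal.ofReal_ne_top, mul_one]

lemma isProbabilityMeasure_densityCondKernel (ha : 0 < a) (hFm : Measurable F)
    (hF : ∀ p, F p ∈ Set.Icc a b) (y : Y) : IsProbabilityMeasure (densityCondKernel β F y) := by
  have hG := ha.trans_le (sliceIntegral_mem_Icc (β := β) ha hFm hF y).1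
  constructor
  have h := ofReal_sliceIntegral_mul_densityCondKernel_apply (β := β) ha hFm hF y
    MeasurableSet.univ
  rw [Measure.restrict_univ, ← ofReal_integral_eq_lintegral_ofReal (integrable_slice ha hFm hF y)
    (ae_of_all _ fun z => (ha.trans_le (hF _).1).le)] at h
  exact (ENNReal.mul_eq_left (by simpa using hG) ENNReal.ofReal_ne_top).mp h

lemma integral_densityCondKernel_sub_le (ha : 0 < a) (hFm : Measurable F)
    (hF : ∀ p, F p ∈ Set.Icc a b) {y y' : Y} {δ : ℝ}
    (hδ : ∀ z, |F (y, z) - F (y', z)| ≤ δ) {g : Z → ℝ} (hg : Measurable g)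
    (hgb : ∀ z, |g z| ≤ 1 / 2) :
    ∫ z, g z ∂densityCondKernel β F y - ∫ z, g z ∂densityCondKernel β F y' ≤ δ / a := by
  have hF0 : ∀ p, 0 ≤ F p := fun p => (ha.trans_le (hF p).1).le
  have hG : ∀ y, 0 < sliceIntegral β F y := fun y =>
    ha.trans_le (sliceIntegral_mem_Icc (β := β) ha hFm hF y).1
  have hsm : ∀ y, Measurable fun z => F (y, z) / sliceIntegral β F y := fun y =>
    (hFm.comp measurable_prodMk_left).div_const _
  have hsi : ∀ y, Integrable (fun z => F (y, z) / sliceIntegral β F y) β := fun y =>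
    (integrable_slice ha hFm hF y).div_const _
  have hs0 : ∀ y z, 0 ≤ F (y, z) / sliceIntegral β F y := fun y z =>
    div_nonneg (hF0 _) (hG y).le
  calc _ ≤ (∫ z, |F (y, z) / sliceIntegral β F y - F (y', z) / sliceIntegral β F y'| ∂β) / 2 :=
        integral_withDensity_sub_le_half_integral_abs (hsm y) (hsm y') (hs0 y) (hs0 y')
          (hsi y) (hsi y') hg hgb
    _ ≤ 2 * δ / a / 2 := by
        gcongr
        exact integral_abs_div_integral_sub_le ha (integrable_slice ha hFm hF y)
          (integrable_slice ha hFm hF y') (fun z => hF0 _)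
          (sliceIntegral_mem_Icc (β := β) ha hFm hF y).1
          (sliceIntegral_mem_Icc ha hFm hF y').1 hδ
    _ = δ / a := by ring

lemma TVDist_map_densityCondKernel_le {W : Type*} [MeasurableSpace W] (ha : 0 < a)
    (hFm : Measurable F) (hF : ∀ p, F p ∈ Set.Icc a b) {y y' : Y} {δ : ℝ}
    (hδ : ∀ z, |F (y, z) - F (y', z)| ≤ δ) {φ : Z → W} (hφ : Measurable φ) :
    TVDist ((densityCondKernel β F y).map φ) ((densityCondKernel β F y').map φ) ≤ δ / a := by
  have : Nonempty Z := nonempty_of_isProbabilityMeasure β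
  refine TVDist_le_of_forall
    (div_nonneg ((abs_nonneg _).trans (hδ (Classical.arbitrary Z))) ha.le) fun g hg hgb => ?_
  rw [integral_map hφ.aemeasurable hg.aestronglyMeasurable,
    integral_map hφ.aemeasurable hg.aestronglyMeasurable]
  exact integral_densityCondKernel_sub_le ha hFm hF hδ (hg.comp hφ) fun z => hgb _

section Product

variable (α : Measure Y) [SFinite α]

lemma map_fst_withDensity_prod (ha : 0 < a) (hFm : Measurable F)
    (hF : ∀ p, F p ∈ Set.Icc a b) :
    ((α.prod β).withDensity fun p => ENNReal.ofReal (F p)).map Prod.fst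
      = α.withDensity fun y => ENNReal.ofReal (sliceIntegral β F y) := by
  ext A hA
  rw [Measure.map_apply measurable_fst hA, ← Set.prod_univ,
    withDensity_prod_apply_prod α hFm hA MeasurableSet.univ, withDensity_apply _ hA]
  refine lintegral_congr fun y => ?_
  rw [Measure.restrict_univ, sliceIntegral, ofReal_integral_eq_lintegral_ofReal
    (integrable_slice ha hFm hF y) (ae_of_all _ fun z => (ha.trans_le (hF _).1).le)]

lemma withDensity_prod_apply_prod_eq_lintegral_densityCondKernel (ha : 0 < a)
    (hFm : Measurable F) (hF : ∀ p, F p ∈ Set.Icc a b) {A : Set Y} {B : Set Z}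
    (hA : MeasurableSet A) (hB : MeasurableSet B) :
    (α.prod β).withDensity (fun p => ENNReal.ofReal (F p)) (A ×ˢ B)
      = ∫⁻ y in A, densityCondKernel β F y B
          ∂(((α.prod β).withDensity fun p => ENNReal.ofReal (F p)).map Prod.fst) := by
  have hGm : Measurable fun y => ENNReal.ofReal (sliceIntegral β F y) :=
    ENNReal.measurable_ofReal.comp (measurable_sliceIntegral hFm)
  have hκm : Measurable fun y => densityCondKernel β F y B :=
    (Measure.measurable_coe hB).comp (measurable_densityCondKernel hFm)
  rw [map_fst_withDensity_prod α ha hFm hF, restrict_withDensity hA,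
    lintegral_withDensity_eq_lintegral_mul _ hGm hκm,
    withDensity_prod_apply_prod α hFm hA hB]
  exact lintegral_congr fun y =>
    (ofReal_sliceIntegral_mul_densityCondKernel_apply ha hFm hF y hB).symm

end Product

end DensityKernel

lemma MeasurableEquiv.map_withDensity {α β : Type*} [MeasurableSpace α] [MeasurableSpace β]
    (e : α ≃ᵐ β) (μ : Measure α) (g : α → ℝ≥0∞) :
    (μ.withDensity g).map e = (μ.map e).withDensity fun y => g (e.symm y) := by
  ext s hs
  rw [e.map_apply, withDensity_apply _ hs, withDensity_apply _ (e.measurable hs),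
    e.measurableEmbedding.restrict_map, lintegral_map_equiv]
  simp only [MeasurableEquiv.symm_apply_apply]

section Coordinates

variable {K : ℕ} (d : Fin K → ℕ)

instance : IsProbabilityMeasure ((volume : Measure ℝ).comap Subtype.val : Measure I01) :=
  inferInstanceAs (IsProbabilityMeasure (volume : Measure unitInterval))

abbrev PtOff (I : Finset (Fin K)) : Type := ∀ j : {k : Fin K // k ∉ I}, Coord d j.1

noncomputable def lebOn (I : Finset (Fin K)) : Measure (PtOn d I) :=
  Measure.pi fun j => Measure.pi fun _ : Fin (d j.1) => (volume : Measure ℝ).comap Subtype.val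

noncomputable def lebOff (I : Finset (Fin K)) : Measure (PtOff d I) :=
  Measure.pi fun j => Measure.pi fun _ : Fin (d j.1) => (volume : Measure ℝ).comap Subtype.val

instance (I : Finset (Fin K)) : IsProbabilityMeasure (lebOff d I) := by
  unfold lebOff; infer_instance

instance (I : Finset (Fin K)) : SFinite (lebOn d I) := by
  unfold lebOn; infer_instance

def splitPt (I : Finset (Fin K)) : Pt d ≃ᵐ PtOn d I × PtOff d I :=
  MeasurableEquiv.piEquivPiSubtypeProd (Coord d) (· ∈ I)

lemma measurePreserving_splitPt (I : Finset (Fin K)) :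
    MeasurePreserving (splitPt d I) (lebPt d) ((lebOn d I).prod (lebOff d I)) := by
  unfold lebPt lebOn lebOff
  convert measurePreserving_piEquivPiSubtypeProd
    (fun k => Measure.pi fun _ : Fin (d k) => (volume : Measure ℝ).comap (Subtype.val : I01 → ℝ))
    (· ∈ I) using 3
  congr!

def offProj {I J : Finset (Fin K)} (hIJ : Disjoint I J) (z : PtOff d I) : PtOn d J :=
  fun j => z ⟨j.1, Finset.disjoint_right.mp hIJ j.2⟩

lemma measurable_offProj {I J : Finset (Fin K)} (hIJ : Disjoint I J) :
    Measurable (offProj d hIJ) :=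
  measurable_pi_lambda _ fun _ => measurable_pi_apply _

lemma dist_splitPt_symm_mk_left (I : Finset (Fin K)) (y y' : PtOn d I) (z : PtOff d I) :
    dist ((splitPt d I).symm (y, z)) ((splitPt d I).symm (y', z)) = dist y y' := by
  refine le_antisymm ((dist_pi_le_iff dist_nonneg).mpr fun k => ?_)
    ((dist_pi_le_iff dist_nonneg).mpr fun j => ?_)
  · by_cases hk : k ∈ I
    · simpa [splitPt, hk] using dist_le_pi_dist y y' ⟨k, hk⟩
    · simp [splitPt, hk]
  · simpa [splitPt, j.2] using dist_le_pi_dist ((splitPt d I).symm (y, z))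
      ((splitPt d I).symm (y', z)) j.1

end Coordinates

lemma exists_isCondD_TVDist_le_of_density {K : ℕ} (d : Fin K → ℕ) {a b D : ℝ} (ha : 0 < a)
    {μ : Measure (Pt d)} {f : Pt d → ℝ} (hLip : ∀ x y : Pt d, |f x - f y| ≤ D * dist x y)
    (hval : ∀ x, f x ∈ Set.Icc a b)
    (hdens : μ = (lebPt d).withDensity fun x => ENNReal.ofReal (f x))
    {I J : Finset (Fin K)} (hIJ : Disjoint I J) :
    ∃ κ : PtOn d I → Measure (PtOn d J), IsCondD d μ I J κ ∧
      ∀ x x', TVDist (κ x) (κ x') ≤ D / a * dist x x' := by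
  set F : PtOn d I × PtOff d I → ℝ := fun p => f ((splitPt d I).symm p)
  have hFm : Measurable F :=
    (LipschitzWith.of_dist_le' fun x y => (Real.dist_eq _ _).trans_le (hLip x y)).continuous
      |>.measurable.comp (splitPt d I).symm.measurable
  have hF : ∀ p, F p ∈ Set.Icc a b := fun p => hval _
  have hmap : μ.map (splitPt d I)
      = ((lebOn d I).prod (lebOff d I)).withDensity fun p => ENNReal.ofReal (F p) := by
    rw [hdens, MeasurableEquiv.map_withDensity, (measurePreserving_splitPt d I).map_eq]
  have hφ := measurable_offProj d hIJ
  refine ⟨fun y => (densityCondKernel (lebOff d I) F y).map (offProj d hIJ),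
    ⟨(Measure.measurable_map _ hφ).comp (measurable_densityCondKernel hFm), fun y => ?_,
      fun A B hA hB => ?_⟩, fun y y' => ?_⟩
  · have := isProbabilityMeasure_densityCondKernel (β := lebOff d I) ha hFm hF y
    exact Measure.isProbabilityMeasure_map hφ.aemeasurable
  · have hproj : μ.map (projOn d I) = (μ.map (splitPt d I)).map Prod.fst := by
      rw [Measure.map_map measurable_fst (splitPt d I).measurable]; rfl
    change μ (splitPt d I ⁻¹' (A ×ˢ (offProj d hIJ ⁻¹' B))) = _
    rw [← (splitPt d I).map_apply, hproj, hmap,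
      withDensity_prod_apply_prod_eq_lintegral_densityCondKernel _ ha hFm hF hA (hφ hB)]
    exact lintegral_congr fun y => (Measure.map_apply hφ hB).symm
  · refine (TVDist_map_densityCondKernel_le (δ := D * dist y y') ha hFm hF (fun z => ?_)
      hφ).trans_eq (by ring)
    simpa [F, dist_splitPt_symm_mk_left] using hLip ((splitPt d I).symm (y, z))
      ((splitPt d I).symm (y', z))

theorem stmt8_general {K : ℕ} (d : Fin K → ℕ) (pa : Fin K → Finset (Fin K))
    (hsort : SortedGraph pa) (a b D : ℝ) (ha : 0 < a)
    (μ : Measure (Pt d))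
    (f : Pt d → ℝ)
    (hLip : ∀ x y : Pt d, |f x - f y| ≤ D * dist x y)
    (hval : ∀ x, f x ∈ Set.Icc a b)
    (hdens : μ = (lebPt d).withDensity fun x => ENNReal.ofReal (f x)) :
    TVLip d pa (D / a + b / a ^ 2) μ := by
  have hb : 0 ≤ b := ha.le.trans ((hval (basePt d)).1.trans (hval (basePt d)).2)
  have hcond : ∀ {I J : Finset (Fin K)}, Disjoint I J →
      ∃ κ : PtOn d I → Measure (PtOn d J), IsCondD d μ I J κ ∧
        ∀ x x', TVDist (κ x) (κ x') ≤ (D / a + b / a ^ 2) * dist x x' := fun hIJ => by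
    obtain ⟨κ, hκ, hTV⟩ := exists_isCondD_TVDist_le_of_density d ha hLip hval hdens hIJ
    exact ⟨κ, hκ, fun x x' => (hTV x x').trans <|
      mul_le_mul_of_nonneg_right (le_add_of_nonneg_right (by positivity)) dist_nonneg⟩
  have hnot : ∀ k, k ∉ pa k := fun k hk => lt_irrefl k (hsort k k hk)
  intro k _
  exact ⟨hcond (Finset.disjoint_singleton_right.mpr (hnot k)), hcond Finset.disjoint_sdiff,
    hcond (Finset.disjoint_singleton_left.mpr (hnot k))⟩

/-- Lemma: Lipschitz densities bounded away from zero give TV-Lipschitz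
kernels. If `0 < a < b`, `μ ∈ P_G` has a density `f` w.r.t. Lebesgue measure on `[0,1]^d`
which is `D`-Lipschitz with values in `[a,b]`, then `μ` satisfies the TV-Lipschitz kernel
assumption with constant `L = D/a + b/a²`. -/
theorem stmt8 {K : ℕ} (d : Fin K → ℕ) (pa : Fin K → Finset (Fin K))
    (hsort : SortedGraph pa) (a b D : ℝ) (ha : 0 < a) (hab : a < b)
    (μ : Measure (Pt d)) (hμ : IsProbabilityMeasure μ) (hPG : MemPG d pa μ)
    (f : Pt d → ℝ)
    (hLip : ∀ x y : Pt d, |f x - f y| ≤ D * dist x y)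
    (hval : ∀ x, f x ∈ Set.Icc a b)
    (hdens : μ = (lebPt d).withDensity fun x => ENNReal.ofReal (f x)) :
    TVLip d pa (D / a + b / a ^ 2) μ :=
  stmt8_general d pa hsort a b D ha μ f hLip hval hdens
end
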